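/- Let S = R⟨x₁,…,xₙ; σ, δ⟩ be a free skew extension with δ locally nilpotent. Then for every a ∈ R and every q ≥ 0 there exists a positive integer N_q(a) such that for every monomial w of length ≥ N_q(a) in x₁,…,xₙ, either a·w = 0 or ord(a·w) > q. Consequently, the multiplication of S extends to a well-defined ring multiplication on the set R⟨⟨x₁,…,xₙ; σ, δ⟩⟩ of formal series Σ_w w a_w over all monomials w. -/

import Mathlib

/-- `δ : R → Rⁿ` is a right `σ`-derivation: additive and
`δ(rs) = δ(r)σ(s) + rδ(s)` (row-by-matrix multiplication componentwise). -/
def IsRightSigmaDeriv {R : Type} [Ring R] {n : ℕ}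
    (σ : R →+* Matrix (Fin n) (Fin n) R) (δ : R → Fin n → R) : Prop :=
  (∀ r s : R, δ (r + s) = δ r + δ s) ∧
  ∀ (r s : R) (j : Fin n), δ (r * s) j = (∑ i, δ r i * σ s i j) + r * δ s j

/-- `S` (an `R`-ring via `lam`) together with `x₁,…,xₙ` is a `(σ,δ)`-free skew
extension of `R`: the multiplicative submonoid generated by the `xᵢ` is free on them
(the induced monoid homomorphism from the free monoid on `n` letters is injective),
`S` is a free right `R`-module with basis the set of monomials in the `xᵢ`
(every element of `S` is uniquely a finite sum `Σ_w w·a_w`), and the commutation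
rule `r·x_j = Σᵢ xᵢσ_{ij}(r) + δ_j(r)` holds. -/
def IsSkewFreeExt {R : Type} [Ring R] {n : ℕ}
    (σ : R →+* Matrix (Fin n) (Fin n) R) (δ : R → Fin n → R)
    (S : Type) [Ring S] (lam : R →+* S) (x : Fin n → S) : Prop :=
  Function.Injective (FreeMonoid.lift x) ∧
  Function.Bijective (fun c : FreeMonoid (Fin n) →₀ R =>
    c.sum fun w a => FreeMonoid.lift x w * lam a) ∧
  ∀ (r : R) (j : Fin n), lam r * x j = (∑ i, x i * lam (σ r i j)) + lam (δ r j)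

/-- Iterated application of the components of `δ` along a list of indices:
`deltaWord δ [j₁, …, j_p] a = δ_{j_p}(⋯(δ_{j₁}(a))⋯)`. -/
def deltaWord {R : Type} [Ring R] {n : ℕ} (δ : R → Fin n → R) :
    List (Fin n) → R → R
  | [], a => a
  | j :: l, a => deltaWord δ l (δ a j)

/-- `δ` is locally nilpotent: for every `a ∈ R` there is `p ≥ 1` such that every
`p`-fold composition of components of `δ` kills `a`. -/
def LocallyNilpotentDeriv {R : Type} [Ring R] {n : ℕ} (δ : R → Fin n → R) : Prop :=
  ∀ a : R, ∃ p : ℕ, 0 < p ∧ ∀ l : List (Fin n), l.length = p → deltaWord δ l a = 0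

/-!
Commuting `a` past the first letter of a monomial gives
`a·x_j w = Σᵢ xᵢ (σᵢⱼ(a) w) + δⱼ(a) w`. The terms of the sum gain a letter on the left, so by
induction on `q` they have order `> q` once `w` is long enough; the last term is handled by an
inner induction on the nilpotency index of `a`, which drops when `a` is replaced by `δⱼ(a)`.
For the series product, the coefficient of `u` in `v b_v · w c_w` vanishes unless `|v| ≤ |u|`
and `w` is shorter than `N_{|u|}(b_v)`, which leaves finitely many pairs `(v, w)`.
-/

namespace SkewFreeExt

open FreeMonoid

theorem _root_.FreeMonoid.finite_setOf_length_le (α : Type) [Finite α] (m : ℕ) :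
    {w : FreeMonoid α | w.length ≤ m}.Finite :=
  (List.finite_length_le α m).preimage toList.injective.injOn

variable {R S : Type} [Ring R] [Ring S] {n : ℕ} (lam : R →+* S) (x : Fin n → S)

noncomputable def monomialSum : (FreeMonoid (Fin n) →₀ R) →+ S :=
  Finsupp.liftAddHom fun w => (AddMonoidHom.mulLeft (lift x w)).comp lam.toAddMonoidHom

theorem monomialSum_single (w : FreeMonoid (Fin n)) (a : R) :
    monomialSum lam x (Finsupp.single w a) = lift x w * lam a :=
  Finsupp.liftAddHom_apply_single _ w a

/-- The elements of order `≥ k`, together with `0`. -/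
def orderFiltration (k : ℕ) : AddSubgroup S :=
  AddSubgroup.closure {s | ∃ w : FreeMonoid (Fin n), k ≤ w.length ∧ ∃ a, s = lift x w * lam a}

variable {lam x}

theorem monomial_mem_orderFiltration {k : ℕ} {w : FreeMonoid (Fin n)} (hw : k ≤ w.length)
    (a : R) : lift x w * lam a ∈ orderFiltration lam x k :=
  AddSubgroup.subset_closure ⟨w, hw, a, rfl⟩

theorem orderFiltration_zero (hsurj : Function.Surjective (monomialSum lam x)) :
    orderFiltration lam x 0 = ⊤ := by
  refine eq_top_iff.2 fun s _ => ?_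
  obtain ⟨c, rfl⟩ := hsurj s
  exact AddSubgroup.sum_mem _ fun w _ => monomial_mem_orderFiltration (Nat.zero_le _) (c w)

theorem lift_mul_mem_orderFiltration (v : FreeMonoid (Fin n)) {k : ℕ} {s : S}
    (hs : s ∈ orderFiltration lam x k) :
    lift x v * s ∈ orderFiltration lam x (v.length + k) := by
  suffices h : orderFiltration lam x k ≤
      (orderFiltration lam x (v.length + k)).comap (AddMonoidHom.mulLeft (lift x v)) from h hs
  refine (AddSubgroup.closure_le _).2 ?_
  rintro _ ⟨w, hw, a, rfl⟩
  change lift x v * (lift x w * lam a) ∈ orderFiltration lam x (v.length + k)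
  rw [← mul_assoc, ← map_mul]
  exact monomial_mem_orderFiltration (by rw [length_mul]; omega) a

theorem mul_lam_mem_orderFiltration (r : R) {k : ℕ} {s : S}
    (hs : s ∈ orderFiltration lam x k) : s * lam r ∈ orderFiltration lam x k := by
  suffices h : orderFiltration lam x k ≤
      (orderFiltration lam x k).comap (AddMonoidHom.mulRight (lam r)) from h hs
  refine (AddSubgroup.closure_le _).2 ?_
  rintro _ ⟨w, hw, a, rfl⟩
  change lift x w * lam a * lam r ∈ orderFiltration lam x k
  rw [mul_assoc, ← map_mul]
  exact monomial_mem_orderFiltration hw (a * r)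

theorem coeff_eq_zero_of_mem_orderFiltration (hbij : Function.Bijective (monomialSum lam x))
    {k : ℕ} {s : S} (hs : s ∈ orderFiltration lam x k) {u : FreeMonoid (Fin n)}
    (hu : u.length < k) : (AddEquiv.ofBijective _ hbij).symm s u = 0 := by
  suffices h : orderFiltration lam x k ≤ AddMonoidHom.ker
      ((Finsupp.applyAddHom u).comp (AddEquiv.ofBijective _ hbij).symm.toAddMonoidHom) from h hs
  refine (AddSubgroup.closure_le _).2 ?_
  rintro _ ⟨w, hw, a, rfl⟩
  have hwu : w ≠ u := by rintro rfl; omega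
  change (AddEquiv.ofBijective _ hbij).symm (lift x w * lam a) u = 0
  rw [← monomialSum_single, ← AddEquiv.ofBijective_apply _ hbij, AddEquiv.symm_apply_apply,
    Finsupp.single_eq_of_ne hwu.symm]

theorem x_mul_mem_orderFiltration (i : Fin n) {k : ℕ} {s : S}
    (hs : s ∈ orderFiltration lam x k) : x i * s ∈ orderFiltration lam x (k + 1) := by
  simpa [add_comm] using lift_mul_mem_orderFiltration (of i) hs

section CommutationRule

variable {σ : R → Matrix (Fin n) (Fin n) R} {δ : R → Fin n → R}
  (hrel : ∀ (r : R) (j : Fin n), lam r * x j = (∑ i, x i * lam (σ r i j)) + lam (δ r j))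
include hrel

theorem lam_mul_lift_of_mul (a : R) (j : Fin n) (w : FreeMonoid (Fin n)) :
    lam a * lift x (of j * w) =
      (∑ i, x i * (lam (σ a i j) * lift x w)) + lam (δ a j) * lift x w := by
  rw [map_mul, lift_eval_of, ← mul_assoc, hrel, add_mul, Finset.sum_mul]
  simp only [mul_assoc]

theorem exists_lam_mul_lift_mem_orderFiltration_succ {k : ℕ}
    (hk : ∀ a : R, ∃ N, ∀ w : FreeMonoid (Fin n), N ≤ w.length →
      lam a * lift x w ∈ orderFiltration lam x k)
    (p : ℕ) (a : R) (hp : ∀ l : List (Fin n), l.length = p → deltaWord δ l a = 0) :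
    ∃ N, ∀ w : FreeMonoid (Fin n), N ≤ w.length →
      lam a * lift x w ∈ orderFiltration lam x (k + 1) := by
  induction p generalizing a with
  | zero =>
    obtain rfl : a = 0 := hp [] rfl
    exact ⟨0, fun w _ => by simp⟩
  | succ p ih =>
    choose Nσ hσ using fun ij : Fin n × Fin n => hk (σ a ij.1 ij.2)
    choose Nδ hδ using fun j => ih (δ a j) fun l hl => hp (j :: l) (by simp [hl])
    refine ⟨(Finset.univ.sup Nσ ⊔ Finset.univ.sup Nδ) + 1, fun w hw => ?_⟩
    cases w with
    | one => simp at hw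
    | of_mul j w =>
      have hw : Finset.univ.sup Nσ ⊔ Finset.univ.sup Nδ ≤ w.length := by
        rw [length_mul, length_of] at hw; omega
      rw [lam_mul_lift_of_mul hrel]
      refine add_mem (sum_mem fun i _ => x_mul_mem_orderFiltration i (hσ (i, j) w ?_)) (hδ j w ?_)
      · exact (Finset.le_sup (Finset.mem_univ (i, j))).trans (le_sup_left.trans hw)
      · exact (Finset.le_sup (Finset.mem_univ j)).trans (le_sup_right.trans hw)

theorem exists_lam_mul_lift_mem_orderFiltration
    (hsurj : Function.Surjective (monomialSum lam x)) (hnil : LocallyNilpotentDeriv δ)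
    (k : ℕ) (a : R) :
    ∃ N, ∀ w : FreeMonoid (Fin n), N ≤ w.length →
      lam a * lift x w ∈ orderFiltration lam x k := by
  induction k generalizing a with
  | zero => exact ⟨0, fun w _ => orderFiltration_zero hsurj ▸ AddSubgroup.mem_top _⟩
  | succ k ih =>
    obtain ⟨p, -, hp⟩ := hnil a
    exact exists_lam_mul_lift_mem_orderFiltration_succ hrel ih p a hp

theorem finite_setOf_coeff_mul_ne_zero (hbij : Function.Bijective (monomialSum lam x))
    (hnil : LocallyNilpotentDeriv δ) (b c : FreeMonoid (Fin n) → R) (u : FreeMonoid (Fin n)) :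
    {p : FreeMonoid (Fin n) × FreeMonoid (Fin n) | (AddEquiv.ofBijective _ hbij).symm
      (lift x p.1 * lam (b p.1) * (lift x p.2 * lam (c p.2))) u ≠ 0}.Finite := by
  choose N hN using fun v =>
    exists_lam_mul_lift_mem_orderFiltration hrel hbij.2 hnil (u.length + 1) (b v)
  refine ((finite_setOf_length_le _ u.length).biUnion fun v _ =>
    (Set.finite_singleton v).prod (finite_setOf_length_le _ (N v))).subset ?_
  rintro ⟨v, w⟩ hvw
  have not_coeff_ne_zero {k : ℕ} (hk : lam (b v) * lift x w ∈ orderFiltration lam x k)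
      (hu : u.length < v.length + k) : False := by
    refine hvw (coeff_eq_zero_of_mem_orderFiltration hbij ?_ hu)
    rw [mul_assoc, ← mul_assoc (lam _), ← mul_assoc]
    exact mul_lam_mem_orderFiltration _ (lift_mul_mem_orderFiltration v hk)
  have hv : v.length ≤ u.length := by
    by_contra! h
    exact not_coeff_ne_zero (orderFiltration_zero hbij.2 ▸ AddSubgroup.mem_top _) (by omega)
  have hw : w.length ≤ N v := by
    by_contra! h
    exact not_coeff_ne_zero (hN v w h.le) (by omega)
  exact Set.mem_biUnion hv ⟨rfl, hw⟩

end CommutationRule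

end SkewFreeExt

theorem skewFreeExt_series_general {R : Type} [Ring R] {n : ℕ}
    (σ : R →+* Matrix (Fin n) (Fin n) R) (δ : R → Fin n → R)
    (hnil : LocallyNilpotentDeriv δ)
    (S : Type) [Ring S] (lam : R →+* S) (x : Fin n → S)
    (hS : IsSkewFreeExt σ δ S lam x) :
    (∀ (a : R) (q : ℕ), ∃ N : ℕ, 0 < N ∧
      ∀ w : FreeMonoid (Fin n), N ≤ (FreeMonoid.toList w).length →
        lam a * FreeMonoid.lift x w = 0 ∨
        ∀ v ∈ ((Equiv.ofBijective _ hS.2.1).symm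
            (lam a * FreeMonoid.lift x w)).support,
          q < (FreeMonoid.toList v).length) ∧
    ∀ (b c : FreeMonoid (Fin n) → R) (u : FreeMonoid (Fin n)),
      Set.Finite {p : FreeMonoid (Fin n) × FreeMonoid (Fin n) |
        ((Equiv.ofBijective _ hS.2.1).symm
          (FreeMonoid.lift x p.1 * lam (b p.1) *
            (FreeMonoid.lift x p.2 * lam (c p.2)))) u ≠ 0} := by
  obtain ⟨-, hbij, hrel⟩ := hS
  refine ⟨fun a q => ?_, SkewFreeExt.finite_setOf_coeff_mul_ne_zero hrel hbij hnil⟩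
  obtain ⟨N, hN⟩ :=
    SkewFreeExt.exists_lam_mul_lift_mem_orderFiltration hrel hbij.2 hnil (q + 1) a
  refine ⟨N + 1, N.succ_pos, fun w hw => Or.inr fun v hv => ?_⟩
  by_contra! hvq
  exact (Finsupp.mem_support_iff.1 hv)
    (SkewFreeExt.coeff_eq_zero_of_mem_orderFiltration hbij (hN w (Nat.le_of_succ_le hw))
      (Nat.lt_succ_of_le hvq))

/-- If `δ` is locally nilpotent then: (1) for every `a ∈ R` and `q ≥ 0` there is
`N > 0` such that for every monomial `w` of length `≥ N`, either `a·w = 0` or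
`ord(a·w) > q` (every monomial occurring in `a·w` has length `> q`); and
(2) the multiplication of `S` extends to the set of formal series
`Σ_w w·a_w`: for any coefficient families `b, c` and any monomial `u`, only
finitely many pairs `(v, w)` contribute a nonzero coefficient of `u` to the
product `(Σ_v v·b_v)(Σ_w w·c_w)`. -/
theorem skewFreeExt_series {R : Type} [Ring R] {n : ℕ}
    (σ : R →+* Matrix (Fin n) (Fin n) R) (δ : R → Fin n → R)
    (hδ : IsRightSigmaDeriv σ δ) (hnil : LocallyNilpotentDeriv δ)
    (S : Type) [Ring S] (lam : R →+* S) (x : Fin n → S)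
    (hS : IsSkewFreeExt σ δ S lam x) :
    (∀ (a : R) (q : ℕ), ∃ N : ℕ, 0 < N ∧
      ∀ w : FreeMonoid (Fin n), N ≤ (FreeMonoid.toList w).length →
        lam a * FreeMonoid.lift x w = 0 ∨
        ∀ v ∈ ((Equiv.ofBijective _ hS.2.1).symm
            (lam a * FreeMonoid.lift x w)).support,
          q < (FreeMonoid.toList v).length) ∧
    ∀ (b c : FreeMonoid (Fin n) → R) (u : FreeMonoid (Fin n)),
      Set.Finite {p : FreeMonoid (Fin n) × FreeMonoid (Fin n) |
        ((Equiv.ofBijective _ hS.2.1).symm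
          (FreeMonoid.lift x p.1 * lam (b p.1) *
            (FreeMonoid.lift x p.2 * lam (c p.2)))) u ≠ 0} :=
  skewFreeExt_series_general σ δ hnil S lam x hS
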